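/- arXiv:0705.3934 — 9 statements merged into one kernel-verified Lean document; each statement's English description precedes it below -/
import Mathlib

section
/- Let M be a smooth manifold, X, Y vector fields, α, β 1-forms, and define the Courant bracket [(X,α),(Y,β)] = ([X,Y], L_X β - L_Y α + ½ d(α(Y) - β(X))) on sections of TM ⊕ T*M, and the pairing g((X,α),(Y,β)) = ½(α(Y) + β(X)). Then for all sections 𝒳 = (X,α), 𝒴 = (Y,β), 𝒵 = (Z,γ): X(g(𝒴,𝒵)) = g([𝒳,𝒴],𝒵) + g(𝒴,[𝒳,𝒵]) + ½(Z(g(𝒳,𝒴)) + Y(g(𝒳,𝒵))). -/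
/-- Axiom (v) of Courant algebroids for the Courant bracket and the
neutral pairing on `TM ⊕ T*M`. Vector fields are modelled as derivations of the
algebra `A` of smooth functions, and 1-forms as `A`-linear functionals on
derivations. The Courant bracket of `(X,α)` and `(Y,β)` is
`([X,Y], L_X β - L_Y α + ½ d(α(Y) - β(X)))`; its 1-form part evaluated at `W` is
`X(β W) - β⁅X,W⁆ - (Y(α W) - α⁅Y,W⁆) + ½ W(α Y - β X)`, and the pairing is
`g((X,α),(Y,β)) = ½(α Y + β X)`. The claim:
`X(g(𝒴,𝒵)) = g([𝒳,𝒴],𝒵) + g(𝒴,[𝒳,𝒵]) + ½(Z(g(𝒳,𝒴)) + Y(g(𝒳,𝒵)))`. -/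
theorem stmt4 (A : Type*) [CommRing A] [Algebra ℝ A]
    (X Y Z : Derivation ℝ A A) (α β γ : Derivation ℝ A A →ₗ[A] A) :
    X ((1 / 2 : ℝ) • (β Z + γ Y)) =
      (1 / 2 : ℝ) • ((X (β Z) - β ⁅X, Z⁆ - (Y (α Z) - α ⁅Y, Z⁆)
            + (1 / 2 : ℝ) • (Z (α Y - β X))) + γ ⁅X, Y⁆)
      + (1 / 2 : ℝ) • (β ⁅X, Z⁆ + (X (γ Y) - γ ⁅X, Y⁆ - (Z (α Y) - α ⁅Z, Y⁆)
            + (1 / 2 : ℝ) • (Y (α Z - γ X))))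
      + (1 / 2 : ℝ) • (Z ((1 / 2 : ℝ) • (α Y + β X))
            + Y ((1 / 2 : ℝ) • (α Z + γ X))) := by
  have h : α ⁅Z, Y⁆ = - α ⁅Y, Z⁆ := by rw [← lie_skew, map_neg]
  simp only [Derivation.map_smul, map_smul, map_add, map_sub, Derivation.map_add, h]
  module
end

section
/- Let F be a smooth distribution (subbundle of TM) on a manifold M and θ a 2-form on M. The subbundle E_θ = {(X, i(X)θ) : X ∈ F} of TM ⊕ T*M is isotropic for the pairing g((X,α),(Y,β)) = ½(α(Y)+β(X)), and its space of sections is closed under the Courant bracket if and only if F is involutive and dθ(X₁, X₂, Y) = 0 for all X₁, X₂ ∈ Γ(F) and all vector fields Y. -/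
/-- For a distribution `F ⊆ TM` (a submodule of vector fields,
modelled as derivations of the function algebra `A`) and a 2-form `θ`, the graph
`E_θ = {(X, i(X)θ) : X ∈ F}` is isotropic for the neutral pairing
`g((X,α),(Y,β)) = ½(α Y + β X)`, and its sections are closed under the Courant
bracket iff `F` is involutive and `dθ(X₁,X₂,Y) = 0` for all `X₁, X₂ ∈ Γ(F)` and
all vector fields `Y`. Here the Courant bracket of `(X, i(X)θ)`, `(Y, i(Y)θ)` is
`(⁅X,Y⁆, ω)` with `ω W = X(θ Y W)... `, closure meaning `⁅X,Y⁆ ∈ F` and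
`ω = i(⁅X,Y⁆)θ`, and `dθ` is given by the Koszul formula. -/
theorem stmt5 (A : Type*) [CommRing A] [Algebra ℝ A]
    (F : Submodule A (Derivation ℝ A A))
    (θ : Derivation ℝ A A →ₗ[A] Derivation ℝ A A →ₗ[A] A)
    (halt : ∀ X, θ X X = 0) :
    (∀ X ∈ F, ∀ Y ∈ F, (1 / 2 : ℝ) • (θ X Y + θ Y X) = 0) ∧
    ((∀ X ∈ F, ∀ Y ∈ F, ⁅X, Y⁆ ∈ F ∧
        (∀ W, X (θ Y W) - θ Y ⁅X, W⁆ - (Y (θ X W) - θ X ⁅Y, W⁆)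
              + (1 / 2 : ℝ) • (W (θ X Y - θ Y X)) = θ ⁅X, Y⁆ W)) ↔
      ((∀ X ∈ F, ∀ Y ∈ F, ⁅X, Y⁆ ∈ F) ∧
       (∀ X ∈ F, ∀ Y ∈ F, ∀ W : Derivation ℝ A A,
          X (θ Y W) - Y (θ X W) + W (θ X Y)
            - θ ⁅X, Y⁆ W + θ ⁅X, W⁆ Y - θ ⁅Y, W⁆ X = 0))) := by
  have skew : ∀ X Y, θ X Y + θ Y X = 0 := by
    intro X Y
    have h := halt (X + Y)
    simp only [map_add, LinearMap.add_apply, halt] at h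
    linear_combination h
  have skew' : ∀ X Y, θ Y X = - θ X Y := fun X Y => by linear_combination skew X Y
  have key : ∀ X Y (W : Derivation ℝ A A),
      (1 / 2 : ℝ) • (W (θ X Y - θ Y X)) = W (θ X Y) := by
    intro X Y W
    rw [skew' X Y, sub_neg_eq_add, map_add, smul_add, ← add_smul]
    norm_num
  refine ⟨fun X _ Y _ => by rw [skew, smul_zero], ?_⟩
  constructor
  · intro h
    refine ⟨fun X hX Y hY => (h X hX Y hY).1, fun X hX Y hY W => ?_⟩
    have hE := (h X hX Y hY).2 W
    rw [key] at hE
    linear_combination hE + skew Y ⁅X, W⁆ - skew X ⁅Y, W⁆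
  · intro h X hX Y hY
    refine ⟨h.1 X hX Y hY, fun W => ?_⟩
    rw [key]
    linear_combination h.2 X hX Y hY W - skew Y ⁅X, W⁆ + skew X ⁅Y, W⁆
end

section
/- Let V be a complex vector space with a bilinear bracket [,], and Φ : V → V linear with Φ³ + Φ = 0, with eigenspace decomposition V = E ⊕ Ē ⊕ S for eigenvalues i, -i, 0. Suppose [E, E ⊕ S] ⊆ E ⊕ S and [Ē, Ē ⊕ S] ⊆ Ē ⊕ S (integrability). Then for all x ∈ E ⊕ Ē and y ∈ S, the Nijenhuis expression N_Φ(x,y) = [Φx,Φy] - Φ[Φx,y] - Φ[x,Φy] + Φ²[x,y] vanishes. -/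
/-- Let `V = E ⊕ Ē ⊕ S` be the eigenspace decomposition of `Φ`
(`Φ³ + Φ = 0`) for eigenvalues `i, -i, 0`, with a bilinear bracket `B`. If
`[E, E ⊕ S] ⊆ E ⊕ S` and `[Ē, Ē ⊕ S] ⊆ Ē ⊕ S`, then the Nijenhuis expression
`N_Φ(x,y) = [Φx,Φy] - Φ[Φx,y] - Φ[x,Φy] + Φ²[x,y]` vanishes for all
`x ∈ E ⊕ Ē` and `y ∈ S`. -/
theorem stmt7 (V : Type*) [AddCommGroup V] [Module ℂ V]
    (B : V →ₗ[ℂ] V →ₗ[ℂ] V)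
    (Φ : V →ₗ[ℂ] V) (hΦ : ∀ x, Φ (Φ (Φ x)) + Φ x = 0)
    (E Eb S : Submodule ℂ V)
    (hE : E = LinearMap.ker (Φ - Complex.I • (LinearMap.id : V →ₗ[ℂ] V)))
    (hEb : Eb = LinearMap.ker (Φ + Complex.I • (LinearMap.id : V →ₗ[ℂ] V)))
    (hS : S = LinearMap.ker Φ)
    (hdecomp : E ⊔ Eb ⊔ S = ⊤)
    (hintE : ∀ u ∈ E, ∀ v ∈ E ⊔ S, B u v ∈ E ⊔ S)
    (hintEb : ∀ u ∈ Eb, ∀ v ∈ Eb ⊔ S, B u v ∈ Eb ⊔ S) :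
    ∀ x ∈ E ⊔ Eb, ∀ y ∈ S,
      B (Φ x) (Φ y) - Φ (B (Φ x) y) - Φ (B x (Φ y)) + Φ (Φ (B x y)) = 0 := by
  have hEapp : ∀ e ∈ E, Φ e = Complex.I • e := by
    intro e he
    rw [hE, LinearMap.mem_ker] at he
    have h : Φ e - Complex.I • e = 0 := by simpa using he
    linear_combination (norm := module) h
  have hEbapp : ∀ e ∈ Eb, Φ e = -(Complex.I • e) := by
    intro e he
    rw [hEb, LinearMap.mem_ker] at he
    have h : Φ e + Complex.I • e = 0 := by simpa using he
    linear_combination (norm := module) h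
  have hSapp : ∀ s ∈ S, Φ s = 0 := by
    intro s hs; rw [hS, LinearMap.mem_ker] at hs; exact hs
  -- For w ∈ E ⊔ S, Φ(Φ w) = I • Φ w
  have hES : ∀ w ∈ E ⊔ S, Φ (Φ w) = Complex.I • Φ w := by
    intro w hw
    obtain ⟨e, he, s, hs, rfl⟩ := Submodule.mem_sup.mp hw
    rw [map_add, hSapp s hs, hEapp e he, add_zero, map_smul, hEapp e he]
  have hEbS : ∀ w ∈ Eb ⊔ S, Φ (Φ w) = -(Complex.I • Φ w) := by
    intro w hw
    obtain ⟨e, he, s, hs, rfl⟩ := Submodule.mem_sup.mp hw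
    rw [map_add, hSapp s hs, hEbapp e he, add_zero, map_neg, map_smul,
      hEbapp e he]
  intro x hx y hy
  obtain ⟨e, he, f, hf, rfl⟩ := Submodule.mem_sup.mp hx
  have hy0 : Φ y = 0 := hSapp y hy
  have hBe : B e y ∈ E ⊔ S := hintE e he y (Submodule.mem_sup_right hy)
  have hBf : B f y ∈ Eb ⊔ S := hintEb f hf y (Submodule.mem_sup_right hy)
  have h1 := hES _ hBe
  have h2 := hEbS _ hBf
  rw [hy0]
  simp only [map_add, map_zero, LinearMap.add_apply, LinearMap.zero_apply,
    LinearMap.map_add, hEapp e he, hEbapp f hf, LinearMap.map_neg,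
    LinearMap.map_smul, LinearMap.smul_apply, LinearMap.neg_apply, h1, h2]
  module
end

section
/- Let H ⊆ H' ⊆ W be complex subspaces of a complex vector space W with a real structure (conjugation). Setting Q_c = H' ∩ conj(H'), the conditions H ∩ conj(H') = 0 and H ⊕ conj(H') = W hold if and only if W = H ⊕ conj(H) ⊕ Q_c with Q_c the complexification of a real subspace. (Equivalence of the 'CR-flag' data (H, H') with the 'normalized CR-structure' data (H, Q).) -/
/-- For complex subspaces `H ⊆ H'` of a complex vector space `W`
with a conjugation (a conjugate-linear involution) `conj`, and
`Q_c = H' ∩ conj(H')`, the conditions `H ∩ conj(H') = 0` and `H ⊕ conj(H') = W`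
hold iff `W = H ⊕ conj(H) ⊕ Q_c` with `Q_c` conj-invariant (the complexification
of a real subspace). -/
theorem stmt8 (W : Type*) [AddCommGroup W] [Module ℂ W]
    (conj : W →ₛₗ[starRingEnd ℂ] W) (hconj : ∀ w, conj (conj w) = w)
    (H H' : Submodule ℂ W) (hHH' : H ≤ H') :
    (H ⊓ Submodule.map conj H' = ⊥ ∧ H ⊔ Submodule.map conj H' = ⊤) ↔
    (H ⊓ (Submodule.map conj H ⊔ (H' ⊓ Submodule.map conj H')) = ⊥ ∧
     Submodule.map conj H ⊓ (H' ⊓ Submodule.map conj H') = ⊥ ∧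
     H ⊔ Submodule.map conj H ⊔ (H' ⊓ Submodule.map conj H') = ⊤ ∧
     Submodule.map conj (H' ⊓ Submodule.map conj H') = H' ⊓ Submodule.map conj H') := by
  have hmem : ∀ (S : Submodule ℂ W) (x : W),
      x ∈ Submodule.map conj S ↔ conj x ∈ S := by
    intro S x
    constructor
    · rintro ⟨s, hs, rfl⟩; simpa [hconj] using hs
    · intro h; exact ⟨conj x, h, hconj x⟩
  have hmapinf : ∀ S T : Submodule ℂ W, Submodule.map conj (S ⊓ T)
      = Submodule.map conj S ⊓ Submodule.map conj T := by
    intro S T; ext x; simp [hmem]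
  have hmapmap : ∀ S : Submodule ℂ W,
      Submodule.map conj (Submodule.map conj S) = S := by
    intro S; ext x; simp [hmem, hconj]
  have hQ : Submodule.map conj (H' ⊓ Submodule.map conj H')
      = H' ⊓ Submodule.map conj H' := by
    rw [hmapinf, hmapmap, inf_comm]
  set Q := H' ⊓ Submodule.map conj H' with hQdef
  constructor
  · rintro ⟨h1, h2⟩
    have hle : Submodule.map conj H ⊔ Q ≤ Submodule.map conj H' :=
      sup_le (Submodule.map_mono hHH') inf_le_right
    refine ⟨?_, ?_, ?_, hQ⟩
    · exact le_bot_iff.mp (le_trans (inf_le_inf_left _ hle) h1.le)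
    · have hc : Submodule.map conj H ⊓ H' = ⊥ := by
        have h := congrArg (Submodule.map conj) h1
        rw [hmapinf, hmapmap] at h
        simpa [Submodule.map_bot] using h
      exact le_bot_iff.mp (le_trans (inf_le_inf_left _ inf_le_left) hc.le)
    · have hH' : H' = H ⊔ Q := by
        have hm := sup_inf_assoc_of_le (Submodule.map conj H') hHH'
        rw [h2, top_inf_eq] at hm
        rw [hm, hQdef, inf_comm]
      have hcH' : Submodule.map conj H' = Submodule.map conj H ⊔ Q := by
        rw [hH', Submodule.map_sup, hQ]
      rw [sup_assoc, ← hcH', h2]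
  · rintro ⟨h1, h2, h3, _⟩
    have hcHH' : Submodule.map conj H ⊓ H' = ⊥ := by
      rw [eq_bot_iff]
      intro y hy
      have hyQ : y ∈ Q := ⟨hy.2, Submodule.map_mono hHH' hy.1⟩
      exact h2.le ⟨hy.1, hyQ⟩
    have hH'le : H' ≤ H ⊔ Q := by
      intro x hx
      have hxT : x ∈ H ⊔ Submodule.map conj H ⊔ Q := h3.ge trivial
      obtain ⟨a, ha, b, hb, rfl⟩ := Submodule.mem_sup.mp hxT
      obtain ⟨h, hh, c, hc, rfl⟩ := Submodule.mem_sup.mp ha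
      have hc0 : c = 0 := by
        have hcH' : c ∈ H' := by
          have : c = (h + c + b) - h - b := by abel
          rw [this]
          exact Submodule.sub_mem _ (Submodule.sub_mem _ hx (hHH' hh)) hb.1
        have := hcHH'.le ⟨hc, hcH'⟩
        simpa using this
      rw [hc0, add_zero]
      exact Submodule.mem_sup.mpr ⟨h, hh, b, hb, rfl⟩
    have hcle : Submodule.map conj H' ≤ Submodule.map conj H ⊔ Q := by
      have := Submodule.map_mono (f := conj) hH'le
      rwa [Submodule.map_sup, hQ] at this
    constructor
    · exact le_bot_iff.mp (le_trans (inf_le_inf_left _ hcle) h1.le)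
    · rw [eq_top_iff, ← h3, sup_assoc]
      exact sup_le le_sup_left
        (sup_le (le_sup_of_le_right (Submodule.map_mono hHH'))
          (le_sup_of_le_right inf_le_right))
end

section
/- With the setup Φ(X,α) = (AX + πα, σX - A*α) on V ⊕ V* where A ∈ End(V), π : V* → V and σ : V → V* skew, the condition Φ³ + Φ = 0 holds if and only if, writing C = A² + πσ + Id, π̃ = Aπ - πA*, σ̃ = σA - A*σ: C A = -π̃σ, C π = π̃ A*, and σ C = A* σ̃. -/
/-- With `Φ(X,α) = (AX + πα, σX - A*α)` on `V ⊕ V*`, where `π` and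
`σ` are skew, `Φ³ + Φ = 0` holds iff, with `C = A² + πσ + Id`, `π̃ = Aπ - πA*`,
`σ̃ = σA - A*σ`: `CA = -π̃σ`, `Cπ = π̃A*`, `σC = A*σ̃`. -/
theorem stmt11 (V : Type*) [AddCommGroup V] [Module ℝ V] [FiniteDimensional ℝ V]
    (A : V →ₗ[ℝ] V) (piM : Module.Dual ℝ V →ₗ[ℝ] V)
    (σ : V →ₗ[ℝ] Module.Dual ℝ V)
    (hpi : ∀ α β : Module.Dual ℝ V, α (piM β) = - β (piM α))
    (hσ : ∀ X Y, σ X Y = - σ Y X) :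
    let Φ : V × Module.Dual ℝ V → V × Module.Dual ℝ V :=
      fun u => (A u.1 + piM u.2, σ u.1 - A.dualMap u.2)
    let C : V →ₗ[ℝ] V := A ∘ₗ A + piM ∘ₗ σ + LinearMap.id
    let pit : Module.Dual ℝ V →ₗ[ℝ] V := A ∘ₗ piM - piM ∘ₗ A.dualMap
    let σt : V →ₗ[ℝ] Module.Dual ℝ V := σ ∘ₗ A - A.dualMap ∘ₗ σ
    (∀ u, Φ (Φ (Φ u)) + Φ u = 0) ↔
      (C ∘ₗ A = -(pit ∘ₗ σ) ∧ C ∘ₗ piM = pit ∘ₗ A.dualMap ∧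
        σ ∘ₗ C = A.dualMap ∘ₗ σt) := by
  intro Φ C pit σt
  constructor
  · intro h
    refine ⟨?_, ?_, ?_⟩
    · ext X
      have h1 := congr_arg Prod.fst (h (X, 0))
      simp only [Φ, map_zero, add_zero, sub_zero, map_add, map_sub, Prod.fst_add,
        Prod.fst_zero] at h1
      simp only [C, pit, LinearMap.comp_apply, LinearMap.add_apply, LinearMap.sub_apply,
        LinearMap.neg_apply, LinearMap.id_apply, map_add, map_sub]
      linear_combination (norm := abel) h1
    · ext α
      have h1 := congr_arg Prod.fst (h (0, α))
      simp only [Φ, map_zero, zero_add, zero_sub, map_add, map_sub, map_neg, Prod.fst_add,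
        Prod.fst_zero] at h1
      simp only [C, pit, LinearMap.comp_apply, LinearMap.add_apply, LinearMap.sub_apply,
        LinearMap.id_apply, map_add, map_sub]
      linear_combination (norm := abel) h1
    · refine LinearMap.ext fun X => ?_
      have h1 := congr_arg Prod.snd (h (X, 0))
      simp only [Φ, map_zero, add_zero, sub_zero, map_add, map_sub, Prod.snd_add,
        Prod.snd_zero] at h1
      simp only [C, σt, LinearMap.comp_apply, LinearMap.add_apply, LinearMap.sub_apply,
        LinearMap.id_apply, map_add, map_sub]
      linear_combination (norm := abel) h1
  · rintro ⟨h1, h2, h3⟩ u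
    have e1 := LinearMap.congr_fun h1 u.1
    have e2 := LinearMap.congr_fun h2 u.2
    have e3 := LinearMap.congr_fun h3 u.1
    simp only [C, pit, σt, LinearMap.comp_apply, LinearMap.add_apply, LinearMap.sub_apply,
      LinearMap.neg_apply, LinearMap.id_apply, map_add, map_sub] at e1 e2 e3
    -- second-component contribution from u.2 vanishes via skewness + h1
    have e4 : σ (A (piM u.2)) - σ (piM (A.dualMap u.2)) - A.dualMap (σ (piM u.2))
        - A.dualMap (A.dualMap (A.dualMap u.2)) - A.dualMap u.2 = 0 := by
      apply LinearMap.ext; intro X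
      have k1 := LinearMap.congr_fun h1 X
      have k1' := congr_arg (fun v => u.2 v) k1
      simp only [C, pit, LinearMap.comp_apply, LinearMap.add_apply, LinearMap.sub_apply,
        LinearMap.neg_apply, LinearMap.id_apply, map_add, map_sub, map_neg] at k1'
      have s1 := hσ (A (piM u.2)) X
      have s2 := hσ (piM (A.dualMap u.2)) X
      have s3 := hσ (piM u.2) (A X)
      have p1 := hpi (A.dualMap (σ X)) u.2
      have p2 := hpi (A.dualMap u.2) (σ X)
      have p3 := hpi u.2 (σ (A X))
      simp only [LinearMap.dualMap_apply, LinearMap.sub_apply, LinearMap.zero_apply,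
        LinearMap.add_apply, map_sub, map_add] at *
      linarith
    have fst : Prod.fst (Φ (Φ (Φ u)) + Φ u) = 0 := by
      simp only [Φ, map_add, map_sub, Prod.fst_add]
      linear_combination (norm := abel) e1 + e2
    have snd : Prod.snd (Φ (Φ (Φ u)) + Φ u) = 0 := by
      simp only [Φ, map_add, map_sub, Prod.snd_add]
      linear_combination (norm := abel) e3 + e4
    exact Prod.ext fst snd
end

section
/- Let V be a real vector space, 𝒱 ⊆ V a subspace, and σ a skew bilinear form on V whose restriction to 𝒱 is nondegenerate and such that V = 𝒱 ⊕ ker(σ♭), where σ♭ : V → V* is X ↦ σ(X,·). Define Φ on V ⊕ V* by Φ(X, α) = (π♯ α, σ♭ X), where π♯ : V* → V is defined as -(σ♭|_𝒱)⁻¹ on im σ♭ ⊆ V* and 0 on ann 𝒱. Then Φ³ + Φ = 0 and Φ is skew-symmetric for the pairing g((X,α),(Y,β)) = ½(α(Y)+β(X)). -/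
/-- Let `𝒱 ⊆ V`, `σ` a skew bilinear form nondegenerate on `𝒱`
with `V = 𝒱 ⊕ ker σ♭`. With `π♯` equal to `-(σ♭|_𝒱)⁻¹` on `im σ♭` and `0` on
`ann 𝒱` (encoded by `hpi1`, `hpi2`, `hspan`), the map `Φ(X,α) = (π♯α, σ♭X)`
satisfies `Φ³ + Φ = 0` and is skew-symmetric for the neutral pairing
`g((X,α),(Y,β)) = ½(α(Y) + β(X))`. -/
theorem stmt12 (V : Type*) [AddCommGroup V] [Module ℝ V]
    (𝒱 : Submodule ℝ V) (σ : V →ₗ[ℝ] Module.Dual ℝ V)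
    (hskew : ∀ X Y, σ X Y = - σ Y X)
    (hnd : ∀ x ∈ 𝒱, (∀ y ∈ 𝒱, σ x y = 0) → x = 0)
    (hcompl : IsCompl 𝒱 (LinearMap.ker σ))
    (piM : Module.Dual ℝ V →ₗ[ℝ] V)
    (hpi1 : ∀ x ∈ 𝒱, piM (σ x) = -x)
    (hpi2 : ∀ α ∈ Submodule.dualAnnihilator 𝒱, piM α = 0)
    (hspan : Submodule.map σ 𝒱 ⊔ Submodule.dualAnnihilator 𝒱 = ⊤) :
    let Φ : V × Module.Dual ℝ V → V × Module.Dual ℝ V :=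
      fun u => (piM u.2, σ u.1)
    (∀ u, Φ (Φ (Φ u)) + Φ u = 0) ∧
    (∀ u v : V × Module.Dual ℝ V,
      (1 / 2 : ℝ) * ((Φ u).2 v.1 + v.2 (Φ u).1)
        + (1 / 2 : ℝ) * (u.2 (Φ v).1 + (Φ v).2 u.1) = 0) := by
  intro Φ
  have hdec : ∀ α : Module.Dual ℝ V, ∃ a ∈ 𝒱, ∃ β ∈ Submodule.dualAnnihilator 𝒱,
      α = σ a + β := by
    intro α
    have hα : α ∈ Submodule.map σ 𝒱 ⊔ Submodule.dualAnnihilator 𝒱 := by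
      rw [hspan]; trivial
    rcases Submodule.mem_sup.mp hα with ⟨x, hx, y, hy, h⟩
    rcases hx with ⟨a, ha, rfl⟩
    exact ⟨a, ha, y, hy, h.symm⟩
  -- piM of a decomposed α
  have hpm : ∀ (a : V), a ∈ 𝒱 → ∀ β ∈ Submodule.dualAnnihilator 𝒱,
      piM (σ a + β) = -a := by
    intro a ha β hβ
    rw [map_add, hpi1 a ha, hpi2 β hβ, add_zero]
  have hσpσ : ∀ X : V, σ (piM (σ X)) = -(σ X) := by
    intro X
    have hX : X ∈ 𝒱 ⊔ LinearMap.ker σ := by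
      rw [hcompl.codisjoint.eq_top]; trivial
    rcases Submodule.mem_sup.mp hX with ⟨v, hv, k, hk, rfl⟩
    have hk0 : σ k = 0 := hk
    rw [map_add, hk0, add_zero, hpi1 v hv, map_neg]
  have hpσp : ∀ α : Module.Dual ℝ V, piM (σ (piM α)) = -(piM α) := by
    intro α
    rcases hdec α with ⟨a, ha, β, hβ, rfl⟩
    rw [hpm a ha β hβ, map_neg, map_neg, hpi1 a ha]
  constructor
  · intro u
    show (piM (σ (piM u.2)), σ (piM (σ u.1))) + (piM u.2, σ u.1) = 0
    rw [hpσp, hσpσ]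
    simp
  · intro u v
    rcases hdec u.2 with ⟨a, ha, β, hβ, hu2⟩
    rcases hdec v.2 with ⟨b, hb, γ, hγ, hv2⟩
    have h1 : (Φ u).2 v.1 + (Φ v).2 u.1 = 0 := by
      show σ u.1 v.1 + σ v.1 u.1 = 0
      rw [hskew u.1 v.1]; ring
    have h2 : v.2 (Φ u).1 + u.2 (Φ v).1 = 0 := by
      show v.2 (piM u.2) + u.2 (piM v.2) = 0
      rw [hu2, hv2, hpm a ha β hβ, hpm b hb γ hγ]
      have hβa : β a = 0 := (Submodule.mem_dualAnnihilator β).mp hβ a ha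
      have hγb : γ b = 0 := (Submodule.mem_dualAnnihilator γ).mp hγ b hb
      have hγa : γ a = 0 := (Submodule.mem_dualAnnihilator γ).mp hγ a ha
      have hβb : β b = 0 := (Submodule.mem_dualAnnihilator β).mp hβ b hb
      simp only [LinearMap.add_apply, map_neg, LinearMap.neg_apply]
      rw [hβa, hγb] at *
      have := hskew a b
      simp [hβa, hγb, this]
      linarith [hskew a b]
    linarith
end

section
/- Let V be a finite-dimensional real vector space with neutral pairing g on V ⊕ V* given by g((X,α),(Y,β)) = ½(α(Y)+β(X)). A positive-definite inner product G on V ⊕ V* whose associated map ♯_G (defined by 2g(♯_G u, v) = G(u,v)) satisfies ♯_G² = Id and g(♯_G u, ♯_G v) = g(u,v) determines a decomposition V ⊕ V* = V₊ ⊕ V₋ into the ±1-eigenspaces of ♯_G, which are g-orthogonal to each other, g is positive definite on V₊ and negative definite on V₋, and dim V₊ = dim V₋ = dim V. -/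
/-- A generalized Riemannian metric: a positive-definite `G` on
`V ⊕ V*` with `♯_G` (defined by `2g(♯_G u, v) = G(u,v)`) satisfying `♯_G² = Id`
and preserving `g` determines the decomposition into `±1`-eigenspaces `V₊, V₋`,
which are `g`-orthogonal, `g` is positive definite on `V₊` and negative definite
on `V₋`, and both have dimension `dim V`. -/
theorem stmt13 (V : Type*) [AddCommGroup V] [Module ℝ V] [FiniteDimensional ℝ V]
    (G : (V × Module.Dual ℝ V) →ₗ[ℝ] (V × Module.Dual ℝ V) →ₗ[ℝ] ℝ)
    (hGsymm : ∀ u v, G u v = G v u)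
    (hGpos : ∀ u, u ≠ 0 → 0 < G u u)
    (sharpG : (V × Module.Dual ℝ V) →ₗ[ℝ] (V × Module.Dual ℝ V))
    (hsharp : ∀ u v, 2 * ((1 / 2 : ℝ) * ((sharpG u).2 v.1 + v.2 (sharpG u).1)) = G u v)
    (hinv : ∀ u, sharpG (sharpG u) = u)
    (hcomp : ∀ u v, (1 / 2 : ℝ) * ((sharpG u).2 (sharpG v).1 + (sharpG v).2 (sharpG u).1)
      = (1 / 2 : ℝ) * (u.2 v.1 + v.2 u.1)) :
    let Vp := LinearMap.ker (sharpG - LinearMap.id)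
    let Vm := LinearMap.ker (sharpG + LinearMap.id)
    IsCompl Vp Vm ∧
    (∀ u ∈ Vp, ∀ v ∈ Vm, (1 / 2 : ℝ) * (u.2 v.1 + v.2 u.1) = 0) ∧
    (∀ u ∈ Vp, u ≠ 0 → 0 < (1 / 2 : ℝ) * (u.2 u.1 + u.2 u.1)) ∧
    (∀ u ∈ Vm, u ≠ 0 → (1 / 2 : ℝ) * (u.2 u.1 + u.2 u.1) < 0) ∧
    Module.finrank ℝ Vp = Module.finrank ℝ V ∧
    Module.finrank ℝ Vm = Module.finrank ℝ V := by
  intro Vp Vm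
  -- membership characterizations
  have hmemp : ∀ u, u ∈ Vp ↔ sharpG u = u := by
    intro u
    simp [Vp, LinearMap.mem_ker, sub_eq_zero, LinearMap.sub_apply]
  have hmemm : ∀ u, u ∈ Vm ↔ sharpG u = -u := by
    intro u
    simp [Vm, LinearMap.mem_ker, LinearMap.add_apply, add_eq_zero_iff_eq_neg]
  -- positive definiteness on Vp
  have hpos : ∀ u ∈ Vp, u ≠ 0 → 0 < (1 / 2 : ℝ) * (u.2 u.1 + u.2 u.1) := by
    intro u hu hne
    have h := hsharp u u
    rw [(hmemp u).1 hu] at h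
    have := hGpos u hne
    nlinarith
  have hneg : ∀ u ∈ Vm, u ≠ 0 → (1 / 2 : ℝ) * (u.2 u.1 + u.2 u.1) < 0 := by
    intro u hu hne
    have h := hsharp u u
    rw [(hmemm u).1 hu] at h
    simp only [Prod.fst_neg, Prod.snd_neg, LinearMap.neg_apply, map_neg] at h
    have := hGpos u hne
    nlinarith
  -- orthogonality
  have horth : ∀ u ∈ Vp, ∀ v ∈ Vm, (1 / 2 : ℝ) * (u.2 v.1 + v.2 u.1) = 0 := by
    intro u hu v hv
    have h := hcomp u v
    rw [(hmemp u).1 hu, (hmemm v).1 hv] at h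
    simp only [Prod.fst_neg, Prod.snd_neg, LinearMap.neg_apply, map_neg] at h
    linarith
  -- IsCompl
  have hdisj : Disjoint Vp Vm := by
    rw [Submodule.disjoint_def]
    intro u hu hv
    have h1 := (hmemp u).1 hu
    have h2 := (hmemm u).1 hv
    have : u = -u := h1.symm.trans h2
    have h3 : (2 : ℝ) • u = 0 := by
      rw [two_smul]
      nth_rewrite 2 [this]
      simp
    simpa using smul_eq_zero.1 h3
  have hcodis : Codisjoint Vp Vm := by
    rw [codisjoint_iff, eq_top_iff]
    intro u _
    have h1 : (1/2 : ℝ) • (u + sharpG u) ∈ Vp := by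
      rw [hmemp]
      simp [map_add, hinv u, add_comm]
    have h2 : (1/2 : ℝ) • (u - sharpG u) ∈ Vm := by
      rw [hmemm]
      rw [map_smul, map_sub, hinv u]
      module
    have : u = (1/2 : ℝ) • (u + sharpG u) + (1/2 : ℝ) • (u - sharpG u) := by module
    rw [this]
    exact Submodule.add_mem_sup h1 h2
  have hcompl : IsCompl Vp Vm := ⟨hdisj, hcodis⟩
  -- dimensions
  have htot : Module.finrank ℝ Vp + Module.finrank ℝ Vm
      = Module.finrank ℝ V + Module.finrank ℝ V := by
    rw [Submodule.finrank_add_eq_of_isCompl hcompl, Module.finrank_prod,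
      Subspace.dual_finrank_eq]
  -- the isotropic subspace V × {0}
  set W : Submodule ℝ (V × Module.Dual ℝ V) :=
    LinearMap.range (LinearMap.inl ℝ V (Module.Dual ℝ V)) with hW
  have hWrank : Module.finrank ℝ W = Module.finrank ℝ V :=
    LinearMap.finrank_range_of_inj LinearMap.inl_injective
  have hWiso : ∀ u ∈ W, u.2 = 0 := by
    rintro u ⟨x, rfl⟩
    rfl
  have hle : ∀ (S : Submodule ℝ (V × Module.Dual ℝ V)),
      (∀ u ∈ S, u ≠ 0 → (1 / 2 : ℝ) * (u.2 u.1 + u.2 u.1) ≠ 0) →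
      Module.finrank ℝ S ≤ Module.finrank ℝ V := by
    intro S hS
    have hdisj : S ⊓ W = ⊥ := by
      rw [Submodule.eq_bot_iff]
      intro u ⟨huS, huW⟩
      by_contra hne
      have := hS u huS hne
      rw [hWiso u huW] at this
      simp at this
    have := Submodule.finrank_sup_add_finrank_inf_eq S W
    rw [hdisj] at this
    simp only [finrank_bot, add_zero] at this
    have hsup : Module.finrank ℝ ↥(S ⊔ W) ≤ Module.finrank ℝ (V × Module.Dual ℝ V) :=
      Submodule.finrank_le _
    rw [Module.finrank_prod, Subspace.dual_finrank_eq] at hsup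
    omega
  have hVple : Module.finrank ℝ Vp ≤ Module.finrank ℝ V :=
    hle Vp (fun u hu hne => ne_of_gt (hpos u hu hne))
  have hVmle : Module.finrank ℝ Vm ≤ Module.finrank ℝ V :=
    hle Vm (fun u hu hne => ne_of_lt (hneg u hu hne))
  refine ⟨hcompl, horth, hpos, hneg, ?_, ?_⟩ <;> omega
end

section
/- Let M be a smooth manifold, γ a Riemannian metric, ψ a 2-form. For vector fields X, Y, the Courant bracket of the sections (X, (ψ±γ)♭X) and (Y, (ψ±γ)♭Y) of TM ⊕ T*M equals ([X,Y], (ψ±γ)♭[X,Y] + i(X∧Y)dψ ± (L_X i(Y)γ - i(X)L_Y γ)). -/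
/-- For a Riemannian metric `γ` and a 2-form `ψ` (vector fields
modelled as derivations of the function algebra `A`), the Courant bracket of
`(X, (ψ ± γ)♭X)` and `(Y, (ψ ± γ)♭Y)` equals
`([X,Y], (ψ ± γ)♭[X,Y] + i(X∧Y)dψ ± (L_X i(Y)γ - i(X) L_Y γ))`.
Both signs are covered via `ε = ±1`; the equality of 1-forms is stated
evaluated at an arbitrary vector field `W` (the vector parts are both `⁅X,Y⁆`). -/
theorem stmt16 (A : Type*) [CommRing A] [Algebra ℝ A]
    (γ : Derivation ℝ A A →ₗ[A] Derivation ℝ A A →ₗ[A] A)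
    (hγsymm : ∀ X Y, γ X Y = γ Y X)
    (ψ : Derivation ℝ A A →ₗ[A] Derivation ℝ A A →ₗ[A] A)
    (hψalt : ∀ X, ψ X X = 0)
    (ε : ℝ) (hε : ε = 1 ∨ ε = -1)
    (X Y : Derivation ℝ A A) :
    ∀ W : Derivation ℝ A A,
      X (ψ Y W + ε • γ Y W) - (ψ Y ⁅X, W⁆ + ε • γ Y ⁅X, W⁆)
        - (Y (ψ X W + ε • γ X W) - (ψ X ⁅Y, W⁆ + ε • γ X ⁅Y, W⁆))
        + (1 / 2 : ℝ) • (W ((ψ X Y + ε • γ X Y) - (ψ Y X + ε • γ Y X)))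
      = (ψ ⁅X, Y⁆ W + ε • γ ⁅X, Y⁆ W)
        + (X (ψ Y W) - Y (ψ X W) + W (ψ X Y)
            - ψ ⁅X, Y⁆ W + ψ ⁅X, W⁆ Y - ψ ⁅Y, W⁆ X)
        + ε • ((X (γ Y W) - γ Y ⁅X, W⁆)
            - (Y (γ X W) - γ ⁅Y, X⁆ W - γ X ⁅Y, W⁆)) := by
  intro W
  have hψanti : ∀ a b : Derivation ℝ A A, ψ a b = - ψ b a := by
    intro a b
    have h := hψalt (a + b)
    simp only [map_add, LinearMap.add_apply, hψalt] at h
    linear_combination h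
  have h1 : (ψ X Y + ε • γ X Y) - (ψ Y X + ε • γ Y X) = ψ X Y + ψ X Y := by
    rw [hγsymm Y X, hψanti Y X]
    module
  rw [h1, map_add W (ψ X Y) (ψ X Y)]
  have h2 : (1 / 2 : ℝ) • (W (ψ X Y) + W (ψ X Y)) = W (ψ X Y) := by
    rw [← two_smul ℝ, smul_smul]; norm_num
  rw [h2, hψanti ⁅X, W⁆ Y, hψanti ⁅Y, W⁆ X, (lie_skew Y X).symm, map_neg,
    LinearMap.neg_apply]
  simp only [map_add, Derivation.map_smul_of_tower]
  module
end

section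
/- Let (M,γ) be a Riemannian manifold with Levi-Civita connection ∇, and F ∈ End(TM) with F³ + F = 0, γ-skew-symmetric, satisfying γ(FX, (∇_Z F)(Y)) = 0 for all vector fields X, Y, Z. Then the distribution Q = ker F is ∇-parallel: for every Y ∈ Γ(Q) and every vector field Z, ∇_Z Y ∈ Γ(Q). -/
/-- Let `γ` be a Riemannian metric (symmetric, nondegenerate) on
the module of vector fields (modelled as derivations of the function algebra
`A`), `nab` its Levi-Civita connection (tensorial in the first slot, a
derivation-rule in the second, metric and torsion-free), and `F` an endomorphism
of the module of vector fields with `F³ + F = 0`, `γ`-skew-symmetric, such that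
`γ(FX, (∇_Z F)(Y)) = 0` for all `X, Y, Z`. Then `Q = ker F` is `∇`-parallel:
`F Y = 0 → F (∇_Z Y) = 0`. -/
theorem stmt17 (A : Type*) [CommRing A] [Algebra ℝ A]
    (γ : Derivation ℝ A A →ₗ[A] Derivation ℝ A A →ₗ[A] A)
    (hsymm : ∀ X Y, γ X Y = γ Y X)
    (hnd : ∀ X, (∀ Y, γ X Y = 0) → X = 0)
    (nab : Derivation ℝ A A → Derivation ℝ A A → Derivation ℝ A A)
    (hadd1 : ∀ Z₁ Z₂ Y, nab (Z₁ + Z₂) Y = nab Z₁ Y + nab Z₂ Y)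
    (hsmul1 : ∀ (f : A) Z Y, nab (f • Z) Y = f • nab Z Y)
    (hadd2 : ∀ Z Y₁ Y₂, nab Z (Y₁ + Y₂) = nab Z Y₁ + nab Z Y₂)
    (hLeib : ∀ Z (f : A) Y, nab Z (f • Y) = Z f • Y + f • nab Z Y)
    (hmetric : ∀ Z Y W, Z (γ Y W) = γ (nab Z Y) W + γ Y (nab Z W))
    (htors : ∀ Z Y, nab Z Y - nab Y Z = ⁅Z, Y⁆)
    (F : Derivation ℝ A A →ₗ[A] Derivation ℝ A A)
    (hF : ∀ X, F (F (F X)) + F X = 0)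
    (hFskew : ∀ X Y, γ (F X) Y + γ X (F Y) = 0)
    (hCRFK : ∀ X Y Z, γ (F X) (nab Z (F Y) - F (nab Z Y)) = 0) :
    ∀ Y Z, F Y = 0 → F (nab Z Y) = 0 := by
  intro Y Z hY
  set W := nab Z Y with hW
  -- nab Z 0 = 0
  have hz : nab Z (0 : Derivation ℝ A A) = 0 := by
    have h := hadd2 Z 0 0
    rw [add_zero] at h
    have := add_right_cancel (a := nab Z 0) (b := nab Z 0) (c := 0)
    exact this (by rw [zero_add]; exact h.symm)
  -- γ (F X) (F W) = 0 for all X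
  have h1 : ∀ X, γ (F X) (F W) = 0 := by
    intro X
    have := hCRFK X Y Z
    rw [hY, hz, zero_sub, map_neg] at this
    simpa using this
  -- γ X (F (F W)) = 0 for all X
  have h2 : ∀ X, γ X (F (F W)) = 0 := by
    intro X
    have := hFskew X (F W)
    rw [h1 X, zero_add] at this
    exact this
  have hFFW : F (F W) = 0 := by
    apply hnd
    intro X
    rw [hsymm]
    exact h2 X
  have := hF W
  rw [hFFW, map_zero, zero_add] at this
  exact this
end
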